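/- arXiv:1207.5925 — 5 statements merged into one kernel-verified Lean document; each statement's English description precedes it below -/
import Mathlib

section
/- Let d ≥ 1, let u₀ : ℝ^d → (0,∞) be continuous and strictly positive, and let T, C₁, σ₁ > 0. Then for every K > 0 there exists δ > 0 such that for every t ∈ (0,T] and every function u : ℝ^d → [0,∞) satisfying u(x) ≥ C₁ ∫_{ℝ^d} G_{σ₁}(t, x−ξ) u₀(ξ) dξ for all x ∈ ℝ^d, one has u(x) ≥ δ whenever |x| ≤ K. -/
open MeasureTheory Real Set

/-- The heat kernel of the standard heat equation in `ℝ^d` with diffusion coefficient `σ`: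
`G_σ(t,x) = (2π t σ²)^{-d/2} exp(-|x|²/(2tσ²))`. -/
noncomputable def heatKernel (d : ℕ) (σ t : ℝ) (x : EuclideanSpace ℝ (Fin d)) : ℝ :=
  (2 * π * t * σ ^ 2) ^ (-(d : ℝ) / 2) * Real.exp (-‖x‖ ^ 2 / (2 * t * σ ^ 2))

/-- Uniform positivity on compact sets for the family of all nonnegative
functions dominating, on a time interval `(0,T]`, `C₁` times the Gaussian convolution of a
fixed strictly positive continuous initial condition `u₀`: for every `K > 0` there is
`δ > 0` such that any such function is `≥ δ` on the ball of radius `K`.  (The convolution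
is expressed as a lower Lebesgue integral, so no integrability of `u₀` is needed.) -/
theorem positivity_from_gaussian_lower_bound
    (d : ℕ) (hd : 1 ≤ d)
    (u₀ : EuclideanSpace ℝ (Fin d) → ℝ)
    (hu₀_cont : Continuous u₀) (hu₀_pos : ∀ x, 0 < u₀ x)
    (T C₁ σ₁ : ℝ) (hT : 0 < T) (hC₁ : 0 < C₁) (hσ₁ : 0 < σ₁) :
    ∀ K > 0, ∃ δ > 0, ∀ t ∈ Ioc (0 : ℝ) T, ∀ u : EuclideanSpace ℝ (Fin d) → ℝ,
      (∀ x, 0 ≤ u x) →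
      (∀ x, ENNReal.ofReal C₁ *
          ∫⁻ ξ, ENNReal.ofReal (heatKernel d σ₁ t (x - ξ) * u₀ ξ) ≤
          ENNReal.ofReal (u x)) →
      ∀ x : EuclideanSpace ℝ (Fin d), ‖x‖ ≤ K → δ ≤ u x := by
  intro K hK
  haveI : Nontrivial (EuclideanSpace ℝ (Fin d)) :=
    ⟨0, EuclideanSpace.single ⟨0, hd⟩ 1, by
      intro h
      have := congrArg (fun v : EuclideanSpace ℝ (Fin d) => v ⟨0, hd⟩) h
      simp at this⟩
  obtain ⟨z, hz, hzmin⟩ :=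
    (isCompact_closedBall (0 : EuclideanSpace ℝ (Fin d)) (K + σ₁ * Real.sqrt T)).exists_isMinOn
      ⟨0, Metric.mem_closedBall_self (by positivity)⟩ hu₀_cont.continuousOn
  set m := u₀ z with hm
  have hm_pos : 0 < m := hu₀_pos z
  have hVfin : volume (Metric.ball (0 : EuclideanSpace ℝ (Fin d)) 1) < ⊤ := measure_ball_lt_top
  have hVpos : 0 < volume (Metric.ball (0 : EuclideanSpace ℝ (Fin d)) 1) :=
    Metric.measure_ball_pos _ _ one_pos
  set V := (volume (Metric.ball (0 : EuclideanSpace ℝ (Fin d)) 1)).toReal with hV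
  have hV_pos : 0 < V := ENNReal.toReal_pos hVpos.ne' hVfin.ne
  refine ⟨C₁ * ((2 * π) ^ (-(d : ℝ) / 2) * Real.exp (-(1 / 2)) * m * V), by positivity, ?_⟩
  rintro t ⟨ht0, htT⟩ u hu0 hulb x hx
  set r := σ₁ * Real.sqrt t with hr
  have hst : 0 < Real.sqrt t := Real.sqrt_pos.mpr ht0
  have hr_pos : 0 < r := by positivity
  set c := (2 * π * t * σ₁ ^ 2) ^ (-(d : ℝ) / 2) * Real.exp (-(1 / 2)) * m with hc
  -- pointwise bound on the ball
  have hpt : ∀ ξ ∈ Metric.ball x r, c ≤ heatKernel d σ₁ t (x - ξ) * u₀ ξ := by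
    intro ξ hξ
    have hd1 : ‖x - ξ‖ < r := by
      rw [← dist_eq_norm]
      exact Metric.mem_ball'.mp hξ
    have h2t : (0 : ℝ) < 2 * t * σ₁ ^ 2 := by positivity
    have hsq : ‖x - ξ‖ ^ 2 ≤ t * σ₁ ^ 2 := by
      have hr2 : r ^ 2 = t * σ₁ ^ 2 := by
        rw [hr, mul_pow, Real.sq_sqrt ht0.le]; ring
      nlinarith [norm_nonneg (x - ξ)]
    have hexp : Real.exp (-(1 / 2)) ≤ Real.exp (-‖x - ξ‖ ^ 2 / (2 * t * σ₁ ^ 2)) := by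
      apply Real.exp_le_exp.mpr
      rw [neg_div, neg_le_neg_iff, div_le_iff₀ h2t]
      nlinarith
    have hmem : ξ ∈ Metric.closedBall (0 : EuclideanSpace ℝ (Fin d)) (K + σ₁ * Real.sqrt T) := by
      rw [Metric.mem_closedBall, dist_zero_right]
      have h1 : ‖ξ‖ - ‖x‖ ≤ ‖ξ - x‖ := norm_sub_norm_le ξ x
      have h2 : ‖ξ - x‖ = ‖x - ξ‖ := norm_sub_rev ξ x
      have h3 : Real.sqrt t ≤ Real.sqrt T := Real.sqrt_le_sqrt htT
      have h4 : σ₁ * Real.sqrt t ≤ σ₁ * Real.sqrt T :=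
        mul_le_mul_of_nonneg_left h3 hσ₁.le
      rw [hr] at hd1
      linarith
    have hmle : m ≤ u₀ ξ := hzmin hmem
    rw [hc, heatKernel]
    gcongr
  -- key t-independent identity
  have hkey : (2 * π * t * σ₁ ^ 2) ^ (-(d : ℝ) / 2) * r ^ d = (2 * π) ^ (-(d : ℝ) / 2) := by
    have h1 : (r : ℝ) ^ d = (t * σ₁ ^ 2) ^ ((d : ℝ) / 2) := by
      have hsq : (t * σ₁ ^ 2) ^ ((1 : ℝ) / 2) = σ₁ * Real.sqrt t := by
        rw [← Real.sqrt_eq_rpow, Real.sqrt_mul ht0.le, Real.sqrt_sq hσ₁.le, mul_comm]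
      rw [hr, ← hsq, ← Real.rpow_natCast ((t * σ₁ ^ 2) ^ ((1 : ℝ) / 2)) d,
        ← Real.rpow_mul (by positivity)]
      rw [show (1 : ℝ) / 2 * (d : ℝ) = (d : ℝ) / 2 by ring]
    have h2 : (2 * π * t * σ₁ ^ 2 : ℝ) = (2 * π) * (t * σ₁ ^ 2) := by ring
    rw [h1, h2, Real.mul_rpow (by positivity) (by positivity), mul_assoc,
      ← Real.rpow_add (by positivity)]
    rw [show -(d : ℝ) / 2 + (d : ℝ) / 2 = 0 by ring, Real.rpow_zero, mul_one]
  -- integral lower bound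
  have h1 : ENNReal.ofReal c * volume (Metric.ball x r) ≤
      ∫⁻ ξ, ENNReal.ofReal (heatKernel d σ₁ t (x - ξ) * u₀ ξ) := by
    calc ENNReal.ofReal c * volume (Metric.ball x r)
        = ∫⁻ _ in Metric.ball x r, ENNReal.ofReal c := (setLIntegral_const _ _).symm
      _ ≤ ∫⁻ ξ in Metric.ball x r, ENNReal.ofReal (heatKernel d σ₁ t (x - ξ) * u₀ ξ) :=
          setLIntegral_mono' measurableSet_ball
            (fun ξ hξ => ENNReal.ofReal_le_ofReal (hpt ξ hξ))
      _ ≤ ∫⁻ ξ, ENNReal.ofReal (heatKernel d σ₁ t (x - ξ) * u₀ ξ) :=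
          setLIntegral_le_lintegral _ _
  have hvol : volume (Metric.ball x r) = ENNReal.ofReal (r ^ d * V) := by
    rw [Measure.addHaar_ball volume x hr_pos.le, finrank_euclideanSpace_fin,
      ENNReal.ofReal_mul (by positivity), hV, ENNReal.ofReal_toReal hVfin.ne]
  have hc_pos : 0 < c := by positivity
  have h3 : ENNReal.ofReal (C₁ * ((2 * π) ^ (-(d : ℝ) / 2) * Real.exp (-(1 / 2)) * m * V)) ≤
      ENNReal.ofReal C₁ * ∫⁻ ξ, ENNReal.ofReal (heatKernel d σ₁ t (x - ξ) * u₀ ξ) := by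
    have heq : C₁ * ((2 * π) ^ (-(d : ℝ) / 2) * Real.exp (-(1 / 2)) * m * V) =
        C₁ * (c * (r ^ d * V)) := by
      rw [hc, ← hkey]; ring
    rw [heq, ENNReal.ofReal_mul hC₁.le]
    refine mul_le_mul_right ?_ _
    rw [ENNReal.ofReal_mul hc_pos.le, ← hvol]
    exact h1
  have hfin := h3.trans (hulb x)
  exact (ENNReal.ofReal_le_ofReal_iff (hu0 x)).mp hfin
end

section
/- Let d ≥ 1, let α = (α₁,…,α_d) with each α_j ∈ (0,1), let u₀ ∈ C(ℝ^d) ∩ L¹(ℝ^d) be strictly positive with ∫u₀ = 1, and let T, C₁, C₂, σ₁, σ₂ > 0. Then there exist constants K, δ, ε > 0 with ε < min_j min(α_j, 1−α_j) such that for every t ∈ (0,T] and every strictly positive continuous integrable u : ℝ^d → (0,∞) with ∫u = 1 satisfying C₁ ∫ G_{σ₁}(t, x−ξ) u₀(ξ) dξ ≤ u(x) ≤ C₂ ∫ G_{σ₂}(t, x−ξ) u₀(ξ) dξ for all x ∈ ℝ^d, the following three properties hold: (a) u(x) ≥ δ whenever max_j |x_j| ≤ 2K; (b) |Q_α^j(u)|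 ≤ K for every j = 1,…,d; (c) ∫_{{x : max_j |x_j| ≥ K}} u(x) dx ≤ ε. -/
open MeasureTheory Real Set

/-! The lower Gaussian bound gives (a): uniformly in `t ≤ T`, half of the mass of
`G_{σ₁}(t, ·)` lies in a fixed ball of radius `ρ`, and `u₀` has a positive minimum on the
`ρ`-neighbourhood of the cube. For (c), Tonelli turns the mass of the upper Gaussian bound on
`{max_j |x_j| ≥ n + r}` into an average over `ξ` of the `G_{σ₂}(t, ·)`-mass of a translate of that
set: for `|ξ| < n` the translate avoids the ball of radius `r`, outside of which the heat kernel has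
mass at most `ε / (2 C₂)` for all `t ≤ T`, while the `ξ` with `|ξ| ≥ n` carry `u₀`-mass below
`ε / (2 C₂)`. Finally (b) follows from (c): a quantile outside `[-K, K]` would leave mass `α_j` or
`1 - α_j > ε` outside the cube. -/

open Filter Topology Metric
open scoped ENNReal

theorem ofReal_integral_le_lintegral_ofReal {α : Type*} [MeasurableSpace α] {ν : Measure α}
    {g : α → ℝ} (hg : 0 ≤ g) : ENNReal.ofReal (∫ a, g a ∂ν) ≤ ∫⁻ a, ENNReal.ofReal (g a) ∂ν := calc
  ENNReal.ofReal (∫ a, g a ∂ν) ≤ ‖∫ a, g a ∂ν‖ₑ := by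
    rw [Real.enorm_eq_ofReal_abs]; exact ENNReal.ofReal_le_ofReal (le_abs_self _)
  _ ≤ ∫⁻ a, ‖g a‖ₑ ∂ν := enorm_integral_le_lintegral_enorm g
  _ = ∫⁻ a, ENNReal.ofReal (g a) ∂ν := by simp_rw [Real.enorm_of_nonneg (hg _)]

section Convolution

variable {G : Type*} [MeasurableSpace G] [AddGroup G] [MeasurableAdd G] [MeasurableSub₂ G]
  {μ : Measure G} [SFinite μ] [μ.IsAddRightInvariant]

theorem setLIntegral_lintegral_sub_mul_le {k f : G → ℝ≥0∞} (hk : Measurable k)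
    (hf : Measurable f) {S B T : Set G} (hB : MeasurableSet B) (hT : MeasurableSet T)
    (hST : ∀ x ∈ S, ∀ ξ ∈ B, x - ξ ∈ T) :
    ∫⁻ x in S, ∫⁻ ξ, k (x - ξ) * f ξ ∂μ ∂μ ≤
      (∫⁻ y in T, k y ∂μ) * ∫⁻ ξ, f ξ ∂μ + (∫⁻ y, k y ∂μ) * ∫⁻ ξ in Bᶜ, f ξ ∂μ := by
  have hmass_B : ∀ ξ ∈ B, ∫⁻ x in S, k (x - ξ) ∂μ ≤ ∫⁻ y in T, k y ∂μ := fun ξ hξ => calc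
    ∫⁻ x in S, k (x - ξ) ∂μ ≤ ∫⁻ x in S, T.indicator k (x - ξ) ∂μ :=
      setLIntegral_mono ((hk.indicator hT).comp (measurable_sub_const ξ)) fun x hx =>
        (indicator_of_mem (hST x hx ξ hξ) k).ge
    _ ≤ ∫⁻ x, T.indicator k (x - ξ) ∂μ := setLIntegral_le_lintegral _ _
    _ = ∫⁻ y in T, k y ∂μ := by rw [lintegral_sub_right_eq_self, lintegral_indicator hT]
  have hmass : ∀ ξ, ∫⁻ x in S, k (x - ξ) ∂μ ≤ ∫⁻ y, k y ∂μ := fun ξ =>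
    (setLIntegral_le_lintegral _ _).trans_eq (lintegral_sub_right_eq_self k ξ)
  calc ∫⁻ x in S, ∫⁻ ξ, k (x - ξ) * f ξ ∂μ ∂μ
      = ∫⁻ ξ, (∫⁻ x in S, k (x - ξ) ∂μ) * f ξ ∂μ := by
        rw [lintegral_lintegral_swap ((hk.comp measurable_sub).mul
          (hf.comp measurable_snd)).aemeasurable]
        exact lintegral_congr fun ξ => lintegral_mul_const _ (hk.comp (measurable_sub_const ξ))
    _ = ∫⁻ ξ in B, (∫⁻ x in S, k (x - ξ) ∂μ) * f ξ ∂μ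
          + ∫⁻ ξ in Bᶜ, (∫⁻ x in S, k (x - ξ) ∂μ) * f ξ ∂μ := (lintegral_add_compl _ hB).symm
    _ ≤ ∫⁻ ξ in B, (∫⁻ y in T, k y ∂μ) * f ξ ∂μ + ∫⁻ ξ in Bᶜ, (∫⁻ y, k y ∂μ) * f ξ ∂μ := by
        refine add_le_add (setLIntegral_mono' hB fun ξ hξ => ?_) (lintegral_mono fun ξ => ?_)
        · exact mul_le_mul_left (hmass_B ξ hξ) _
        · exact mul_le_mul_left (hmass ξ) _
    _ ≤ (∫⁻ y in T, k y ∂μ) * ∫⁻ ξ, f ξ ∂μ + (∫⁻ y, k y ∂μ) * ∫⁻ ξ in Bᶜ, f ξ ∂μ := by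
        rw [lintegral_const_mul _ hf, lintegral_const_mul _ hf]
        exact add_le_add_left (mul_le_mul_right (setLIntegral_le_lintegral _ _) _) _

theorem setIntegral_le_of_le_integral_sub_mul {k f u : G → ℝ} (hk : Measurable k) (hk0 : 0 ≤ k)
    (hk_int : Integrable k μ) (hf : Measurable f) (hf0 : 0 ≤ f) (hf_int : Integrable f μ)
    (hu : AEStronglyMeasurable u μ) (hu0 : 0 ≤ u) {C : ℝ} (hC : 0 ≤ C)
    (hup : ∀ x, u x ≤ C * ∫ ξ, k (x - ξ) * f ξ ∂μ) {S B T : Set G} (hB : MeasurableSet B)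
    (hT : MeasurableSet T) (hST : ∀ x ∈ S, ∀ ξ ∈ B, x - ξ ∈ T) :
    ∫ x in S, u x ∂μ ≤
      C * ((∫ y in T, k y ∂μ) * ∫ ξ, f ξ ∂μ + (∫ y, k y ∂μ) * ∫ ξ in Bᶜ, f ξ ∂μ) := by
  have hpt : ∀ x, ENNReal.ofReal (u x) ≤
      ENNReal.ofReal C * ∫⁻ ξ, ENNReal.ofReal (k (x - ξ)) * ENNReal.ofReal (f ξ) ∂μ := fun x =>
    calc ENNReal.ofReal (u x) ≤ ENNReal.ofReal C * ENNReal.ofReal (∫ ξ, k (x - ξ) * f ξ ∂μ) := by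
          rw [← ENNReal.ofReal_mul hC]; exact ENNReal.ofReal_le_ofReal (hup x)
      _ ≤ ENNReal.ofReal C * ∫⁻ ξ, ENNReal.ofReal (k (x - ξ)) * ENNReal.ofReal (f ξ) ∂μ := by
          simp_rw [← ENNReal.ofReal_mul (hk0 _)]
          gcongr
          exact ofReal_integral_le_lintegral_ofReal fun ξ => mul_nonneg (hk0 _) (hf0 ξ)
  have hlin : ∀ {g : G → ℝ} (s : Set G), Integrable g μ → 0 ≤ g →
      ∫⁻ x in s, ENNReal.ofReal (g x) ∂μ = ENNReal.ofReal (∫ x in s, g x ∂μ) := fun s hg hg0 =>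
    (ofReal_integral_eq_lintegral_ofReal hg.integrableOn (ae_of_all _ hg0)).symm
  have hkT : 0 ≤ ∫ y in T, k y ∂μ := integral_nonneg hk0
  have hk1 : 0 ≤ ∫ y, k y ∂μ := integral_nonneg hk0
  have hf1 : 0 ≤ ∫ ξ, f ξ ∂μ := integral_nonneg hf0
  have hfB : 0 ≤ ∫ ξ in Bᶜ, f ξ ∂μ := integral_nonneg hf0
  rw [integral_eq_lintegral_of_nonneg_ae (ae_of_all _ hu0) hu.restrict]
  refine ENNReal.toReal_le_of_le_ofReal (by positivity) ?_
  calc ∫⁻ x in S, ENNReal.ofReal (u x) ∂μ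
      ≤ ∫⁻ x in S, ENNReal.ofReal C *
          ∫⁻ ξ, ENNReal.ofReal (k (x - ξ)) * ENNReal.ofReal (f ξ) ∂μ ∂μ := lintegral_mono hpt
    _ = ENNReal.ofReal C *
          ∫⁻ x in S, ∫⁻ ξ, ENNReal.ofReal (k (x - ξ)) * ENNReal.ofReal (f ξ) ∂μ ∂μ :=
        lintegral_const_mul' _ _ ENNReal.ofReal_ne_top
    _ ≤ ENNReal.ofReal C * ((∫⁻ y in T, ENNReal.ofReal (k y) ∂μ) * ∫⁻ ξ, ENNReal.ofReal (f ξ) ∂μ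
          + (∫⁻ y, ENNReal.ofReal (k y) ∂μ) * ∫⁻ ξ in Bᶜ, ENNReal.ofReal (f ξ) ∂μ) :=
        by gcongr
           exact setLIntegral_lintegral_sub_mul_le hk.ennreal_ofReal hf.ennreal_ofReal hB hT hST
    _ = _ := by
        rw [hlin T hk_int hk0, hlin Bᶜ hf_int hf0,
          ← ofReal_integral_eq_lintegral_ofReal hk_int (ae_of_all _ hk0),
          ← ofReal_integral_eq_lintegral_ofReal hf_int (ae_of_all _ hf0),
          ← ENNReal.ofReal_mul hkT, ← ENNReal.ofReal_mul hk1,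
          ← ENNReal.ofReal_add, ← ENNReal.ofReal_mul hC] <;> positivity

end Convolution

section NormedGroup

variable {E : Type*} [NormedAddCommGroup E] [MeasurableSpace E] [BorelSpace E] {μ : Measure E}

theorem setIntegral_ball_mul_le_integral_sub_mul [μ.IsAddLeftInvariant] [μ.IsNegInvariant]
    {k f : E → ℝ} (hk0 : 0 ≤ k) (hf0 : 0 ≤ f) {x : E}
    (hint : Integrable (fun ξ => k (x - ξ) * f ξ) μ) {r m : ℝ} (hm0 : 0 ≤ m)
    (hm : ∀ ξ ∈ ball x r, m ≤ f ξ) :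
    (∫ y in ball 0 r, k y ∂μ) * m ≤ ∫ ξ, k (x - ξ) * f ξ ∂μ := by
  have hball : (fun ξ => x - ξ) ⁻¹' ball 0 r = ball x r := by
    ext ξ; simp [dist_eq_norm, norm_sub_rev]
  calc (∫ y in ball 0 r, k y ∂μ) * m = ∫ ξ in ball x r, k (x - ξ) * m ∂μ := by
        rw [integral_mul_const, ← hball, (Measure.measurePreserving_sub_left μ x)
          |>.setIntegral_preimage_emb (measurableEmbedding_subLeft x)]
    _ ≤ ∫ ξ in ball x r, k (x - ξ) * f ξ ∂μ :=
        integral_mono_of_nonneg (ae_of_all _ fun ξ => mul_nonneg (hk0 _) hm0) hint.integrableOn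
          ((ae_restrict_iff' measurableSet_ball).2 (ae_of_all _ fun ξ hξ =>
            mul_le_mul_of_nonneg_left (hm ξ hξ) (hk0 _)))
    _ ≤ ∫ ξ, k (x - ξ) * f ξ ∂μ :=
        setIntegral_le_integral hint (ae_of_all _ fun ξ => mul_nonneg (hk0 _) (hf0 ξ))

theorem tendsto_setIntegral_compl_ball {F : Type*} [NormedAddCommGroup F] [NormedSpace ℝ F]
    {f : E → F} (hf : Integrable f μ) (x : E) :
    Tendsto (fun r : ℝ => ∫ y in (ball x r)ᶜ, f y ∂μ) atTop (𝓝 0) := by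
  have hempty : ⋂ r : ℝ, (ball x r)ᶜ = ∅ :=
    eq_empty_of_forall_notMem fun y hy => mem_iInter.1 hy (dist y x + 1) (mem_ball.2 (lt_add_one _))
  simpa [hempty] using tendsto_setIntegral_of_antitone (s := fun r : ℝ => (ball x r)ᶜ)
    (fun r => measurableSet_ball.compl)
    (fun r s hrs => compl_subset_compl.2 (ball_subset_ball hrs)) ⟨0, hf.integrableOn⟩

end NormedGroup

theorem abs_le_of_setIntegral_tail_le {Ω : Type*} [MeasurableSpace Ω] {μ : Measure Ω} {u : Ω → ℝ}
    (hu0 : 0 ≤ u) (hu : Integrable u μ) (hmass : ∫ ω, u ω ∂μ = 1) {φ : Ω → ℝ}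
    (hφ : Measurable φ) {q a K ε : ℝ} (hq : ∫ ω in {ω | φ ω ≤ q}, u ω ∂μ = a) {S : Set Ω}
    (hε : ∫ ω in S, u ω ∂μ ≤ ε) (hS : {ω | K ≤ |φ ω|} ⊆ S) (hεa : ε < min a (1 - a)) :
    |q| ≤ K := by
  have hmono : ∀ {s : Set Ω}, s ⊆ S → ∫ ω in s, u ω ∂μ ≤ ε := fun hs =>
    (setIntegral_mono_set hu.integrableOn (ae_of_all _ hu0) hs.eventuallyLE).trans hε
  by_contra! hK
  rcases lt_abs.1 hK with hqK | hqK
  · have hcompl := integral_add_compl (measurableSet_le hφ (measurable_const (a := q))) hu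
    have : ∫ ω in {ω | φ ω ≤ q}ᶜ, u ω ∂μ ≤ ε := hmono fun ω hω =>
      hS ((hqK.trans (not_le.1 hω)).le.trans (le_abs_self _))
    linarith [min_le_right a (1 - a)]
  · have hsub : {ω | φ ω ≤ q} ⊆ S := fun ω (hω : φ ω ≤ q) =>
      hS (show K ≤ |φ ω| by linarith [neg_abs_le (φ ω)])
    have : a ≤ ε := hq ▸ hmono hsub
    linarith [min_le_left a (1 - a)]

section HeatKernel

variable {d : ℕ} {σ t : ℝ}

theorem heatKernel_nonneg (ht : 0 ≤ t) (x : EuclideanSpace ℝ (Fin d)) :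
    0 ≤ heatKernel d σ t x := by
  unfold heatKernel; positivity

theorem continuous_heatKernel (d : ℕ) (σ t : ℝ) : Continuous (heatKernel d σ t) := by
  unfold heatKernel; fun_prop

theorem heatKernel_le_heatKernel_zero (ht : 0 ≤ t) (x : EuclideanSpace ℝ (Fin d)) :
    heatKernel d σ t x ≤ heatKernel d σ t 0 := by
  unfold heatKernel
  gcongr
  simp

theorem integral_heatKernel (ht : 0 < t) (hσ : σ ≠ 0) :
    ∫ x, heatKernel d σ t x = 1 := by
  have hG : heatKernel d σ t = fun x =>
      (2 * π * t * σ ^ 2) ^ (-(d : ℝ) / 2) * rexp (-(2 * t * σ ^ 2)⁻¹ * ‖x‖ ^ 2) := by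
    funext x; unfold heatKernel; ring_nf
  have hb : π / (2 * t * σ ^ 2)⁻¹ = 2 * π * t * σ ^ 2 := by field_simp
  rw [hG, integral_const_mul, GaussianFourier.integral_rexp_neg_mul_sq_norm (by positivity),
    finrank_euclideanSpace_fin, hb, neg_div, rpow_neg (by positivity),
    inv_mul_cancel₀ (by positivity)]

theorem integrable_heatKernel (ht : 0 < t) (hσ : σ ≠ 0) : Integrable (heatKernel d σ t) :=
  .of_integral_ne_zero (by rw [integral_heatKernel ht hσ]; exact one_ne_zero)

theorem integrable_heatKernel_sub_mul (ht : 0 ≤ t) {f : EuclideanSpace ℝ (Fin d) → ℝ}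
    (hf : Integrable f) (x : EuclideanSpace ℝ (Fin d)) :
    Integrable fun ξ => heatKernel d σ t (x - ξ) * f ξ :=
  hf.bdd_mul ((continuous_heatKernel d σ t).comp (continuous_sub_left x)).aestronglyMeasurable
    (ae_of_all _ fun ξ => by
      rw [Real.norm_of_nonneg (heatKernel_nonneg ht _)]
      exact heatKernel_le_heatKernel_zero ht _)

theorem heatKernel_le_mul_heatKernel_two_mul (ht : 0 < t) (hσ : σ ≠ 0) {r : ℝ} (hr : 0 ≤ r)
    {x : EuclideanSpace ℝ (Fin d)} (hx : r ≤ ‖x‖) :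
    heatKernel d σ t x ≤
      2 ^ ((d : ℝ) / 2) * rexp (-r ^ 2 / (4 * t * σ ^ 2)) * heatKernel d σ (2 * t) x := by
  have hconst : (2 * π * (2 * t) * σ ^ 2) ^ (-(d : ℝ) / 2)
      = (2 ^ ((d : ℝ) / 2))⁻¹ * (2 * π * t * σ ^ 2) ^ (-(d : ℝ) / 2) := by
    rw [← rpow_neg zero_le_two, ← neg_div, ← mul_rpow zero_le_two (by positivity)]
    ring_nf
  have hexp : -‖x‖ ^ 2 / (2 * t * σ ^ 2)
      ≤ -r ^ 2 / (4 * t * σ ^ 2) + -‖x‖ ^ 2 / (2 * (2 * t) * σ ^ 2) := by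
    have hrx : r ^ 2 ≤ ‖x‖ ^ 2 := pow_le_pow_left₀ hr hx 2
    rw [show 2 * (2 * t) * σ ^ 2 = 4 * t * σ ^ 2 by ring, ← add_div,
      show -‖x‖ ^ 2 / (2 * t * σ ^ 2) = -2 * ‖x‖ ^ 2 / (4 * t * σ ^ 2) by
        field_simp; ring]
    gcongr
    linarith
  unfold heatKernel
  rw [hconst]
  calc (2 * π * t * σ ^ 2) ^ (-(d : ℝ) / 2) * rexp (-‖x‖ ^ 2 / (2 * t * σ ^ 2))
      ≤ (2 * π * t * σ ^ 2) ^ (-(d : ℝ) / 2) *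
          rexp (-r ^ 2 / (4 * t * σ ^ 2) + -‖x‖ ^ 2 / (2 * (2 * t) * σ ^ 2)) := by gcongr
    _ = _ := by
        rw [exp_add]
        field_simp

theorem setIntegral_compl_ball_heatKernel_le (ht : 0 < t) (hσ : σ ≠ 0) {r : ℝ} (hr : 0 ≤ r) :
    ∫ x in (ball 0 r)ᶜ, heatKernel d σ t x ≤
      2 ^ ((d : ℝ) / 2) * rexp (-r ^ 2 / (4 * t * σ ^ 2)) := by
  set A := 2 ^ ((d : ℝ) / 2) * rexp (-r ^ 2 / (4 * t * σ ^ 2))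
  have hint : Integrable fun x => A * heatKernel d σ (2 * t) x :=
    (integrable_heatKernel (by positivity) hσ).const_mul A
  calc ∫ x in (ball 0 r)ᶜ, heatKernel d σ t x
      ≤ ∫ x in (ball 0 r)ᶜ, A * heatKernel d σ (2 * t) x :=
        setIntegral_mono_on (integrable_heatKernel ht hσ).integrableOn hint.integrableOn
          measurableSet_ball.compl fun x hx =>
            heatKernel_le_mul_heatKernel_two_mul ht hσ hr (by simpa using hx)
    _ ≤ ∫ x, A * heatKernel d σ (2 * t) x :=
        setIntegral_le_integral hint (ae_of_all _ fun x =>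
          mul_nonneg (by positivity) (heatKernel_nonneg (by positivity) x))
    _ = A := by rw [integral_const_mul, integral_heatKernel (by positivity) hσ, mul_one]

theorem eventually_setIntegral_compl_ball_heatKernel_le {T : ℝ} (hT : 0 < T) (hσ : σ ≠ 0)
    {η : ℝ} (hη : 0 < η) :
    ∀ᶠ r in atTop, ∀ t ∈ Ioc 0 T, ∫ x in (ball 0 r)ᶜ, heatKernel d σ t x ≤ η := by
  have hdecay : Tendsto (fun r : ℝ => 2 ^ ((d : ℝ) / 2) * rexp (-r ^ 2 / (4 * T * σ ^ 2)))
      atTop (𝓝 0) := by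
    simpa only [Function.comp_def, neg_div, mul_zero] using (tendsto_exp_neg_atTop_nhds_zero.comp
      ((tendsto_pow_atTop two_ne_zero).atTop_div_const (by positivity))).const_mul
      (2 ^ ((d : ℝ) / 2))
  filter_upwards [hdecay.eventually_lt_const hη, eventually_ge_atTop 0] with r hr hr0 t ht
  calc ∫ x in (ball 0 r)ᶜ, heatKernel d σ t x
      ≤ 2 ^ ((d : ℝ) / 2) * rexp (-r ^ 2 / (4 * t * σ ^ 2)) :=
        setIntegral_compl_ball_heatKernel_le ht.1 hσ hr0
    _ ≤ 2 ^ ((d : ℝ) / 2) * rexp (-r ^ 2 / (4 * T * σ ^ 2)) := by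
        gcongr 2 ^ _ * rexp ?_
        rw [neg_div, neg_div, neg_le_neg_iff]
        have := ht.1
        gcongr
        exact ht.2
    _ ≤ η := hr.le

theorem div_two_le_integral_heatKernel_sub_mul (ht : 0 < t) (hσ : σ ≠ 0)
    {f : EuclideanSpace ℝ (Fin d) → ℝ} (hf0 : 0 ≤ f) (hf : Integrable f)
    {x : EuclideanSpace ℝ (Fin d)} {r m : ℝ} (hm0 : 0 ≤ m) (hm : ∀ ξ ∈ ball x r, m ≤ f ξ)
    (htail : ∫ y in (ball 0 r)ᶜ, heatKernel d σ t y ≤ 1 / 2) :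
    m / 2 ≤ ∫ ξ, heatKernel d σ t (x - ξ) * f ξ := by
  have hball : 1 / 2 ≤ ∫ y in ball 0 r, heatKernel d σ t y := by
    have := integral_add_compl (s := ball 0 r) measurableSet_ball
      (integrable_heatKernel (d := d) ht hσ)
    rw [integral_heatKernel ht hσ] at this
    linarith
  calc m / 2 ≤ (∫ y in ball 0 r, heatKernel d σ t y) * m := by nlinarith
    _ ≤ _ := setIntegral_ball_mul_le_integral_sub_mul (heatKernel_nonneg ht.le) hf0
        (integrable_heatKernel_sub_mul ht.le hf x) hm0 hm

end HeatKernel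

theorem isCompact_setOf_forall_abs_le {ι : Type*} (a : ℝ) :
    IsCompact {x : EuclideanSpace ℝ ι | ∀ j, |x j| ≤ a} := by
  convert (EuclideanSpace.equiv ι ℝ).toHomeomorph.isCompact_preimage.2
    (isCompact_univ_pi fun _ => isCompact_Icc (a := -a) (b := a)) using 1
  ext x
  simp only [mem_ofPred_eq, mem_preimage, mem_univ_pi, mem_Icc, abs_le]
  rfl

theorem abs_apply_sub_norm_le_norm_sub {ι : Type*} [Fintype ι] (x ξ : EuclideanSpace ℝ ι)
    (j : ι) :
    |x j| - ‖ξ‖ ≤ ‖x - ξ‖ :=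
  calc |x j| - ‖ξ‖ ≤ |x j| - |ξ j| := by gcongr; exact PiLp.norm_apply_le ξ j
    _ ≤ |x j - ξ j| := abs_sub_abs_le_abs_sub _ _
    _ ≤ ‖x - ξ‖ := PiLp.norm_apply_le (x - ξ) j


theorem setIntegral_exists_le_abs_apply_le {d : ℕ} {σ t : ℝ} (ht : 0 < t) (hσ : σ ≠ 0)
    {u₀ u : EuclideanSpace ℝ (Fin d) → ℝ} (hu₀ : Measurable u₀) (hu₀0 : 0 ≤ u₀)
    (hu₀_int : Integrable u₀) (hu : AEStronglyMeasurable u) (hu0 : 0 ≤ u) {C : ℝ} (hC : 0 ≤ C)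
    (hup : ∀ x, u x ≤ C * ∫ ξ, heatKernel d σ t (x - ξ) * u₀ ξ) (n r : ℝ) :
    ∫ x in {x : EuclideanSpace ℝ (Fin d) | ∃ j, n + r ≤ |x j|}, u x ≤
      C * ((∫ y in (ball 0 r)ᶜ, heatKernel d σ t y) * (∫ ξ, u₀ ξ) + ∫ ξ in (ball 0 n)ᶜ, u₀ ξ) := by
  have hST : ∀ x ∈ {x : EuclideanSpace ℝ (Fin d) | ∃ j, n + r ≤ |x j|}, ∀ ξ ∈ ball 0 n,
      x - ξ ∈ (ball 0 r)ᶜ := by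
    rintro x ⟨j, hj⟩ ξ hξ
    rw [mem_ball_zero_iff] at hξ
    rw [mem_compl_iff, mem_ball_zero_iff, not_lt]
    linarith [abs_apply_sub_norm_le_norm_sub x ξ j]
  simpa only [integral_heatKernel ht hσ, one_mul] using
    setIntegral_le_of_le_integral_sub_mul (continuous_heatKernel d σ t).measurable
      (heatKernel_nonneg ht.le) (integrable_heatKernel ht hσ) hu₀ hu₀0 hu₀_int hu hu0 hC hup
      measurableSet_ball measurableSet_ball.compl hST

theorem quantile_localization_fixed_initial_density_general
    (d : ℕ)
    (α : Fin d → ℝ) (hα : ∀ j, α j ∈ Ioo (0 : ℝ) 1)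
    (u₀ : EuclideanSpace ℝ (Fin d) → ℝ)
    (hu₀_cont : Continuous u₀) (hu₀_pos : ∀ x, 0 < u₀ x)
    (hu₀_int : Integrable u₀) (hu₀_mass : ∫ x, u₀ x = 1)
    (T C₁ C₂ σ₁ σ₂ : ℝ) (hT : 0 < T) (hC₁ : 0 < C₁) (hC₂ : 0 < C₂)
    (hσ₁ : 0 < σ₁) (hσ₂ : 0 < σ₂) :
    ∃ K δ ε : ℝ, 0 < K ∧ 0 < δ ∧ 0 < ε ∧ (∀ j, ε < min (α j) (1 - α j)) ∧
      ∀ t ∈ Ioc (0 : ℝ) T, ∀ u : EuclideanSpace ℝ (Fin d) → ℝ,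
        Continuous u → (∀ x, 0 < u x) → Integrable u → (∫ x, u x) = 1 →
        (∀ x, C₁ * ∫ ξ, heatKernel d σ₁ t (x - ξ) * u₀ ξ ≤ u x) →
        (∀ x, u x ≤ C₂ * ∫ ξ, heatKernel d σ₂ t (x - ξ) * u₀ ξ) →
        ((∀ x : EuclideanSpace ℝ (Fin d), (∀ j, |x j| ≤ 2 * K) → δ ≤ u x) ∧
          (∀ q : Fin d → ℝ,
            (∀ j, ∫ x in {x : EuclideanSpace ℝ (Fin d) | x j ≤ q j}, u x = α j) →
            ∀ j, |q j| ≤ K) ∧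
          ∫ x in {x : EuclideanSpace ℝ (Fin d) | ∃ j, K ≤ |x j|}, u x ≤ ε) := by
  obtain ⟨ε, hε0, hεα⟩ : ∃ ε, 0 < ε ∧ ∀ j, ε < min (α j) (1 - α j) :=
    ((eventually_mem_nhdsWithin (a := 0) (s := Ioi 0)).and (eventually_all.2 fun j =>
      nhdsWithin_le_nhds (eventually_lt_nhds (lt_min (hα j).1 (sub_pos.2 (hα j).2))))).exists
  have hη : 0 < ε / (2 * C₂) := by positivity
  obtain ⟨n, hn0, hn⟩ := ((eventually_gt_atTop 0).and
    ((tendsto_setIntegral_compl_ball hu₀_int 0).eventually_lt_const hη)).exists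
  obtain ⟨r, hr0, hr⟩ := ((eventually_ge_atTop 0).and
    (eventually_setIntegral_compl_ball_heatKernel_le (d := d) hT hσ₂.ne' hη)).exists
  obtain ⟨ρ, hρ⟩ := (eventually_setIntegral_compl_ball_heatKernel_le (d := d) hT hσ₁.ne'
    one_half_pos).exists
  obtain ⟨m, hm0, hm⟩ := ((isCompact_setOf_forall_abs_le (2 * (n + r))).cthickening
    (r := ρ)).exists_forall_le' hu₀_cont.continuousOn fun ξ _ => hu₀_pos ξ
  refine ⟨n + r, C₁ * (m / 2), ε, by positivity, by positivity, hε0, hεα, ?_⟩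
  rintro t ht u hu_cont hu_pos hu_int hu_mass hlow hup
  have hmass : ∫ x in {x : EuclideanSpace ℝ (Fin d) | ∃ j, n + r ≤ |x j|}, u x ≤ ε := calc
    _ ≤ C₂ * (ε / (2 * C₂) * 1 + ε / (2 * C₂)) := by
        grw [setIntegral_exists_le_abs_apply_le ht.1 hσ₂.ne' hu₀_cont.measurable
          (fun ξ => (hu₀_pos ξ).le) hu₀_int hu_cont.aestronglyMeasurable (fun x => (hu_pos x).le)
          hC₂.le hup, hu₀_mass, hr t ht, hn]
    _ = ε := by field_simp; ring
  refine ⟨fun x hx => ?_, fun q hq j => ?_, hmass⟩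
  · calc C₁ * (m / 2) ≤ C₁ * ∫ ξ, heatKernel d σ₁ t (x - ξ) * u₀ ξ := by
          gcongr
          exact div_two_le_integral_heatKernel_sub_mul ht.1 hσ₁.ne' (fun ξ => (hu₀_pos ξ).le)
            hu₀_int hm0.le (fun ξ hξ => hm ξ (mem_cthickening_of_dist_le ξ x ρ _ hx
              (mem_ball.1 hξ).le)) (hρ t ht)
      _ ≤ u x := hlow x
  · exact abs_le_of_setIntegral_tail_le (fun x => (hu_pos x).le) hu_int hu_mass
      (by fun_prop) (hq j) hmass (fun x hx => ⟨j, hx⟩) (hεα j)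

/-- Localization of the quantile vector for probability densities sandwiched
between two Gaussian convolutions of a fixed strictly positive continuous integrable initial
density `u₀`: there are `K, δ, ε > 0` with `ε < min_j min(α_j, 1-α_j)` such that any such
density `u` at time `t ∈ (0,T]` satisfies (a) `u ≥ δ` on the cube `{max_j |x_j| ≤ 2K}`,
(b) every coordinate of its quantile vector is bounded by `K`, and (c) the mass of `u` on
`{max_j |x_j| ≥ K}` is at most `ε`. -/
theorem quantile_localization_fixed_initial_density
    (d : ℕ) (hd : 1 ≤ d)
    (α : Fin d → ℝ) (hα : ∀ j, α j ∈ Ioo (0 : ℝ) 1)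
    (u₀ : EuclideanSpace ℝ (Fin d) → ℝ)
    (hu₀_cont : Continuous u₀) (hu₀_pos : ∀ x, 0 < u₀ x)
    (hu₀_int : Integrable u₀) (hu₀_mass : ∫ x, u₀ x = 1)
    (T C₁ C₂ σ₁ σ₂ : ℝ) (hT : 0 < T) (hC₁ : 0 < C₁) (hC₂ : 0 < C₂)
    (hσ₁ : 0 < σ₁) (hσ₂ : 0 < σ₂) :
    ∃ K δ ε : ℝ, 0 < K ∧ 0 < δ ∧ 0 < ε ∧ (∀ j, ε < min (α j) (1 - α j)) ∧
      ∀ t ∈ Ioc (0 : ℝ) T, ∀ u : EuclideanSpace ℝ (Fin d) → ℝ,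
        Continuous u → (∀ x, 0 < u x) → Integrable u → (∫ x, u x) = 1 →
        (∀ x, C₁ * ∫ ξ, heatKernel d σ₁ t (x - ξ) * u₀ ξ ≤ u x) →
        (∀ x, u x ≤ C₂ * ∫ ξ, heatKernel d σ₂ t (x - ξ) * u₀ ξ) →
        ((∀ x : EuclideanSpace ℝ (Fin d), (∀ j, |x j| ≤ 2 * K) → δ ≤ u x) ∧
          (∀ q : Fin d → ℝ,
            (∀ j, ∫ x in {x : EuclideanSpace ℝ (Fin d) | x j ≤ q j}, u x = α j) →
            ∀ j, |q j| ≤ K) ∧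
          ∫ x in {x : EuclideanSpace ℝ (Fin d) | ∃ j, K ≤ |x j|}, u x ≤ ε) :=
  quantile_localization_fixed_initial_density_general d α hα u₀ hu₀_cont hu₀_pos hu₀_int hu₀_mass T
    C₁ C₂ σ₁ σ₂ hT hC₁ hC₂ hσ₁ hσ₂
end

section
/- Let u₁, u₂ : ℝ → (0,∞) be continuous, strictly positive, integrable functions with ∫u₁ = ∫u₂ = 1, and let α ∈ (0,1). For h ∈ [0,1] set u_h = u₁ + h(u₂ − u₁) (which is strictly positive with total integral 1) and let ω(h) = Q_α(u_h) be its α-quantile. Then ω is differentiable on [0,1] and for every h ∈ [0,1]: ω'(h) = − [u₁(ω(h)) + h(u₂(ω(h)) − u₁(ω(h)))]^{−1} ∫_{−∞}^{ω(h)} (u₂(x) − u₁(x)) dx. -/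
/-! Fix `h` and put `Φ t = ∫_{-∞}^t u_h`, strictly increasing with `Φ' = u_h > 0`, and
`G t = ∫_{-∞}^t (u₂ - u₁)`, bounded and continuous. Since `∫_{-∞}^t u_{h'}` is affine in `h'`, the
defining equation of `ω` reads `Φ (ω h') + (h' - h) G (ω h') = Φ (ω h)`. Boundedness of `G` and the
monotonicity of `Φ` make `ω` continuous at `h`; dividing the identity by `h' - h` then expresses the
difference quotient of `ω` as `-G (ω h')` over a difference quotient of `Φ`, which tends to
`Φ' (ω h) = u_h (ω h)`. -/

open MeasureTheory Real Set Filter Topology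

section IntegralIic

variable {f : ℝ → ℝ}

theorem hasDerivAt_integral_Iic (hc : Continuous f) (hi : Integrable f) (y : ℝ) :
    HasDerivAt (fun t => ∫ x in Iic t, f x) (f y) y := by
  have hsplit : (fun t => ∫ x in Iic t, f x) =
      fun t => (∫ x in Iic 0, f x) + ∫ x in (0 : ℝ)..t, f x := by
    ext t
    rw [← intervalIntegral.integral_Iic_sub_Iic hi.integrableOn hi.integrableOn]
    ring
  rw [hsplit]
  exact (hc.integral_hasStrictDerivAt 0 y).hasDerivAt.const_add _

theorem strictMono_integral_Iic (hi : Integrable f) (hpos : ∀ x, 0 < f x) :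
    StrictMono fun t => ∫ x in Iic t, f x := fun a b hab => by
  have hdiff : (∫ x in Iic b, f x) - ∫ x in Iic a, f x = ∫ x in a..b, f x :=
    intervalIntegral.integral_Iic_sub_Iic hi.integrableOn hi.integrableOn
  have := intervalIntegral.intervalIntegral_pos_of_pos hi.intervalIntegrable hpos hab
  linarith

theorem abs_integral_Iic_le (hi : Integrable f) (t : ℝ) :
    |∫ x in Iic t, f x| ≤ ∫ x, |f x| :=
  (abs_integral_le_integral_abs).trans
    (setIntegral_le_integral hi.abs (.of_forall fun x => abs_nonneg (f x)))

end IntegralIic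

section ImplicitFunction

variable {Φ g ω : ℝ → ℝ} {s : Set ℝ} {h₀ : ℝ}

theorem continuousWithinAt_of_add_mul_eq (hΦ : StrictMono Φ) (hΦc : Continuous Φ) {M : ℝ}
    (hg : ∀ y, |g y| ≤ M) (hω : ∀ h ∈ s, Φ (ω h) + (h - h₀) * g (ω h) = Φ (ω h₀)) :
    ContinuousWithinAt ω s h₀ := by
  have hemb := hΦ.isEmbedding_of_ordConnected (isPreconnected_range hΦc).ordConnected
  rw [ContinuousWithinAt, hemb.tendsto_nhds_iff]
  have hsmall : Tendsto (fun h => (h - h₀) * g (ω h)) (𝓝[s] h₀) (𝓝 0) := by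
    refine squeeze_zero_norm (a := fun h => |h - h₀| * M) (fun h => ?_) ?_
    · rw [norm_mul, Real.norm_eq_abs, Real.norm_eq_abs]
      exact mul_le_mul_of_nonneg_left (hg _) (abs_nonneg _)
    · have : Tendsto (fun h => |h - h₀| * M) (𝓝 h₀) (𝓝 (|h₀ - h₀| * M)) :=
        Continuous.tendsto (by fun_prop) h₀
      simpa using this.mono_left nhdsWithin_le_nhds
  have := (tendsto_const_nhds (x := Φ (ω h₀))).sub hsmall
  rw [sub_zero] at this
  refine this.congr' ?_
  filter_upwards [self_mem_nhdsWithin] with h hh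
  simp [← hω h hh]

theorem hasDerivWithinAt_of_add_mul_eq {d : ℝ} (hΦ : HasDerivAt Φ d (ω h₀)) (hd : d ≠ 0)
    (hg : ContinuousAt g (ω h₀)) (hωc : ContinuousWithinAt ω s h₀)
    (hω : ∀ h ∈ s, Φ (ω h) + (h - h₀) * g (ω h) = Φ (ω h₀)) :
    HasDerivWithinAt ω (-d⁻¹ * g (ω h₀)) s h₀ := by
  -- `dslope` is continuous at `ω h₀`, so the case `ω h = ω h₀` needs no separate treatment.
  set D := fun h => dslope Φ (ω h₀) (ω h)
  have hωc' : ContinuousWithinAt ω (s \ {h₀}) h₀ := hωc.mono sdiff_subset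
  have hD : Tendsto D (𝓝[s \ {h₀}] h₀) (𝓝 d) := by
    have := (continuousAt_dslope_same.2 hΦ.differentiableAt).tendsto.comp hωc'
    rwa [Function.comp_def, dslope_same, hΦ.deriv] at this
  have hslope : ∀ h ∈ s, h ≠ h₀ → D h ≠ 0 → slope ω h₀ h = -g (ω h) / D h := by
    intro h hh hne hDne
    have hmul : (ω h - ω h₀) * D h = -((h - h₀) * g (ω h)) := by
      rw [← smul_eq_mul, sub_smul_dslope]
      linarith [hω h hh]
    rw [slope_def_field, div_eq_div_iff (sub_ne_zero.2 hne) hDne, hmul]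
    ring
  have hlim : Tendsto (fun h => -g (ω h) / D h) (𝓝[s \ {h₀}] h₀) (𝓝 (-g (ω h₀) / d)) :=
    (hg.tendsto.comp hωc').neg.div hD hd
  rw [hasDerivWithinAt_iff_tendsto_slope, neg_mul, ← div_eq_inv_mul, ← neg_div]
  refine hlim.congr' ?_
  filter_upwards [self_mem_nhdsWithin, hD.eventually_ne hd] with h ⟨hh, hne⟩ hDne
  exact (hslope h hh hne hDne).symm

end ImplicitFunction

theorem integral_add_mul_sub_eq {X : Type*} [MeasurableSpace X] {μ : Measure X} {u₁ u₂ : X → ℝ}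
    (h₁i : Integrable u₁ μ) (h₂i : Integrable u₂ μ) (h h' : ℝ) :
    ∫ x, (u₁ x + h' * (u₂ x - u₁ x)) ∂μ =
      ∫ x, (u₁ x + h * (u₂ x - u₁ x)) ∂μ + (h' - h) * ∫ x, (u₂ x - u₁ x) ∂μ := by
  have hdi : Integrable (fun x => u₂ x - u₁ x) μ := h₂i.sub h₁i
  rw [integral_add h₁i (hdi.const_mul h'), integral_add h₁i (hdi.const_mul h),
    integral_const_mul, integral_const_mul]
  ring

theorem quantile_derivative_along_segment_general
    (u₁ u₂ : ℝ → ℝ)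
    (h₁c : Continuous u₁) (h₂c : Continuous u₂)
    (h₁p : ∀ x, 0 < u₁ x) (h₂p : ∀ x, 0 < u₂ x)
    (h₁i : Integrable u₁) (h₂i : Integrable u₂)
    (α : ℝ)
    (ω : ℝ → ℝ)
    (hω : ∀ h ∈ Icc (0 : ℝ) 1, ∫ x in Iic (ω h), (u₁ x + h * (u₂ x - u₁ x)) = α) :
    ∀ h ∈ Icc (0 : ℝ) 1,
      HasDerivWithinAt ω
        (-(u₁ (ω h) + h * (u₂ (ω h) - u₁ (ω h)))⁻¹ * ∫ x in Iic (ω h), (u₂ x - u₁ x))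
        (Icc (0 : ℝ) 1) h := by
  intro h hh
  set v := fun x => u₁ x + h * (u₂ x - u₁ x)
  have hvc : Continuous v := by fun_prop
  have hvi : Integrable v := h₁i.add ((h₂i.sub h₁i).const_mul h)
  have hvp : ∀ x, 0 < v x := fun x => by
    rcases le_total (u₁ x) (u₂ x) with hle | hle
    · nlinarith [h₁p x, mul_nonneg hh.1 (sub_nonneg.2 hle)]
    · nlinarith [h₂p x, mul_nonneg (sub_nonneg.2 hh.2) (sub_nonneg.2 hle)]
  have hsegment : ∀ h' ∈ Icc (0 : ℝ) 1, (∫ x in Iic (ω h'), v x) +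
      (h' - h) * ∫ x in Iic (ω h'), (u₂ x - u₁ x) = ∫ x in Iic (ω h), v x := fun h' hh' => by
    rw [hω h hh, ← hω h' hh', integral_add_mul_sub_eq h₁i.integrableOn h₂i.integrableOn h h']
  have hωc := continuousWithinAt_of_add_mul_eq (strictMono_integral_Iic hvi hvp)
    (continuous_iff_continuousAt.2 fun t => (hasDerivAt_integral_Iic hvc hvi t).continuousAt)
    (abs_integral_Iic_le (h₂i.sub h₁i)) hsegment
  exact hasDerivWithinAt_of_add_mul_eq (hasDerivAt_integral_Iic hvc hvi (ω h)) (hvp _).ne'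
    (hasDerivAt_integral_Iic (by fun_prop) (h₂i.sub h₁i) (ω h)).continuousAt hωc hsegment

/-- Let `u_h = u₁ + h (u₂ - u₁)` for `h ∈ [0,1]` and let `ω(h) = Q_α(u_h)`
be its `α`-quantile, i.e. `∫_{-∞}^{ω(h)} u_h = α`. Then `ω` is differentiable on `[0,1]` with
`ω'(h) = -[u₁(ω(h)) + h (u₂(ω(h)) - u₁(ω(h)))]⁻¹ ∫_{-∞}^{ω(h)} (u₂ - u₁)`. -/
theorem quantile_derivative_along_segment
    (u₁ u₂ : ℝ → ℝ)
    (h₁c : Continuous u₁) (h₂c : Continuous u₂)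
    (h₁p : ∀ x, 0 < u₁ x) (h₂p : ∀ x, 0 < u₂ x)
    (h₁i : Integrable u₁) (h₂i : Integrable u₂)
    (h₁m : ∫ x, u₁ x = 1) (h₂m : ∫ x, u₂ x = 1)
    (α : ℝ) (hα : α ∈ Ioo (0 : ℝ) 1)
    (ω : ℝ → ℝ)
    (hω : ∀ h ∈ Icc (0 : ℝ) 1, ∫ x in Iic (ω h), (u₁ x + h * (u₂ x - u₁ x)) = α) :
    ∀ h ∈ Icc (0 : ℝ) 1,
      HasDerivWithinAt ω
        (-(u₁ (ω h) + h * (u₂ (ω h) - u₁ (ω h)))⁻¹ * ∫ x in Iic (ω h), (u₂ x - u₁ x))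
        (Icc (0 : ℝ) 1) h :=
  quantile_derivative_along_segment_general u₁ u₂ h₁c h₂c h₁p h₂p h₁i h₂i α ω hω
end

section
/- Let u₁, u₂ : ℝ → (0,∞) be continuous, strictly positive, integrable functions with ∫u₁ = ∫u₂ = 1, let α ∈ (0,1), and let δ > 0. If u₁(x) ≥ δ for every x in the closed interval with endpoints Q_α(u₁) and Q_α(u₂), then |Q_α(u₁) − Q_α(u₂)| ≤ (1/δ) ‖u₁ − u₂‖_L. -/
open MeasureTheory Real Set

/-!
The distribution function `F₁ q = ∫_{-∞}^q u₁` grows at rate at least `δ` between the two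
quantiles, so `δ |q₁ - q₂| ≤ |F₁ q₁ - F₁ q₂| = |F₂ q₂ - F₁ q₂|`, and the difference of two
distribution functions at a point is bounded by the `L¹` distance of the densities.
-/

theorem abs_setIntegral_sub_le_integral_abs_sub {α : Type*} [MeasurableSpace α] {μ : Measure α}
    {f g : α → ℝ} (hf : Integrable f μ) (hg : Integrable g μ) (s : Set α) :
    |(∫ x in s, f x ∂μ) - ∫ x in s, g x ∂μ| ≤ ∫ x, |f x - g x| ∂μ :=
  calc |(∫ x in s, f x ∂μ) - ∫ x in s, g x ∂μ| = |∫ x in s, (f x - g x) ∂μ| := by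
        rw [integral_sub hf.integrableOn hg.integrableOn]
    _ ≤ ∫ x in s, |f x - g x| ∂μ := abs_integral_le_integral_abs
    _ ≤ ∫ x, |f x - g x| ∂μ :=
        setIntegral_le_integral (hf.sub hg).abs (.of_forall fun _ => abs_nonneg _)

theorem mul_sub_le_integral_Iic_sub_integral_Iic {f : ℝ → ℝ} {a b δ : ℝ}
    (hf : IntegrableOn f (Iic b)) (hab : a ≤ b) (hδ : ∀ x ∈ Icc a b, δ ≤ f x) :
    δ * (b - a) ≤ (∫ x in Iic b, f x) - ∫ x in Iic a, f x := by
  rw [intervalIntegral.integral_Iic_sub_Iic (hf.mono_set (Iic_subset_Iic.2 hab)) hf,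
    intervalIntegral.integral_of_le hab]
  calc δ * (b - a) = ∫ _ in Ioc a b, δ := by
        simp [hab, mul_comm]
    _ ≤ ∫ x in Ioc a b, f x :=
        setIntegral_mono_on (integrableOn_const (by simp) (by simp))
          (hf.mono_set Ioc_subset_Iic_self) measurableSet_Ioc
          fun x hx => hδ x (Ioc_subset_Icc_self hx)

theorem mul_abs_sub_le_abs_integral_Iic_sub {f : ℝ → ℝ} {a b δ : ℝ} (hf : Integrable f)
    (hδ : ∀ x ∈ uIcc a b, δ ≤ f x) :
    δ * |a - b| ≤ |(∫ x in Iic a, f x) - ∫ x in Iic b, f x| := by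
  rcases le_total a b with hab | hba
  · rw [abs_sub_comm a, abs_of_nonneg (sub_nonneg.2 hab), abs_sub_comm]
    exact (mul_sub_le_integral_Iic_sub_integral_Iic hf.integrableOn hab
      (uIcc_of_le hab ▸ hδ)).trans (le_abs_self _)
  · rw [abs_of_nonneg (sub_nonneg.2 hba)]
    exact (mul_sub_le_integral_Iic_sub_integral_Iic hf.integrableOn hba
      (uIcc_of_ge hba ▸ hδ)).trans (le_abs_self _)

theorem quantile_lipschitz_in_L1_one_dim_general
    (u₁ u₂ : ℝ → ℝ)
    (h₁i : Integrable u₁) (h₂i : Integrable u₂)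
    (α : ℝ)
    (δ : ℝ) (hδ : 0 < δ)
    (q₁ q₂ : ℝ)
    (hq₁ : ∫ x in Iic q₁, u₁ x = α)
    (hq₂ : ∫ x in Iic q₂, u₂ x = α)
    (hlow : ∀ x ∈ uIcc q₁ q₂, δ ≤ u₁ x) :
    |q₁ - q₂| ≤ δ⁻¹ * ∫ x, |u₁ x - u₂ x| := by
  rw [le_inv_mul_iff₀ hδ]
  calc δ * |q₁ - q₂| ≤ |(∫ x in Iic q₁, u₁ x) - ∫ x in Iic q₂, u₁ x| :=
        mul_abs_sub_le_abs_integral_Iic_sub h₁i hlow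
    _ = |(∫ x in Iic q₂, u₁ x) - ∫ x in Iic q₂, u₂ x| := by rw [hq₁, ← hq₂, abs_sub_comm]
    _ ≤ ∫ x, |u₁ x - u₂ x| := abs_setIntegral_sub_le_integral_abs_sub h₁i h₂i _

/-- One-dimensional Lipschitz estimate for the `α`-quantile in `L¹`-distance:
if `u₁ ≥ δ` on the closed interval between the two quantiles, then
`|Q_α(u₁) - Q_α(u₂)| ≤ δ⁻¹ ‖u₁ - u₂‖_{L¹}`. -/
theorem quantile_lipschitz_in_L1_one_dim
    (u₁ u₂ : ℝ → ℝ)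
    (h₁c : Continuous u₁) (h₂c : Continuous u₂)
    (h₁p : ∀ x, 0 < u₁ x) (h₂p : ∀ x, 0 < u₂ x)
    (h₁i : Integrable u₁) (h₂i : Integrable u₂)
    (h₁m : ∫ x, u₁ x = 1) (h₂m : ∫ x, u₂ x = 1)
    (α : ℝ) (hα : α ∈ Ioo (0 : ℝ) 1)
    (δ : ℝ) (hδ : 0 < δ)
    (q₁ q₂ : ℝ)
    (hq₁ : ∫ x in Iic q₁, u₁ x = α)
    (hq₂ : ∫ x in Iic q₂, u₂ x = α)
    (hlow : ∀ x ∈ uIcc q₁ q₂, δ ≤ u₁ x) :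
    |q₁ - q₂| ≤ δ⁻¹ * ∫ x, |u₁ x - u₂ x| :=
  quantile_lipschitz_in_L1_one_dim_general u₁ u₂ h₁i h₂i α δ hδ q₁ q₂ hq₁ hq₂ hlow
end

section
/- Let d ≥ 1, let u₁, u₂ : ℝ^d → (0,∞) be continuous, strictly positive, integrable functions with ∫u₁ = ∫u₂ = 1, let α = (α₁,…,α_d) with each α_j ∈ (0,1), let K, δ > 0, and fix j ∈ {1,…,d}. Assume that |Q_α^j(u₁)| ≤ K and |Q_α^j(u₂)| ≤ K, and that u₁(x) ≥ δ for every x with |x_j| ≤ K and max_{k≠j} |x_k| ≤ 2K. Then |Q_α^j(u₁) − Q_α^j(u₂)| ≤ ‖u₁ − u₂‖_L / (δ (4K)^{d−1}). -/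
open MeasureTheory Real Set

open scoped Interval

/-!
Let `a < b` be the two `j`-th quantiles. The slab `{a < x_j ≤ b}` carries `u₁`-mass equal to the
difference of the `u₂`- and `u₁`-masses of one half-space `{x_j ≤ q}`, hence at most
`‖u₁ - u₂‖_{L¹}`. On the other hand it contains the box `(a, b] × [-2K, 2K]^{d-1}`, of volume
`(b - a) (4K)^{d-1}`, on which `u₁ ≥ δ`.
-/

section HalfSpaces

variable {X : Type*} [MeasurableSpace X] {μ : Measure X} {φ : X → ℝ} {f g : X → ℝ}

theorem setIntegral_preimage_Ioc_eq_sub (hφ : Measurable φ) (hf : Integrable f μ) {p q : ℝ}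
    (hpq : p ≤ q) :
    ∫ x in φ ⁻¹' Ioc p q, f x ∂μ = ∫ x in {x | φ x ≤ q}, f x ∂μ - ∫ x in {x | φ x ≤ p}, f x ∂μ := by
  have hdiff : φ ⁻¹' Ioc p q = {x | φ x ≤ q} \ {x | φ x ≤ p} := by
    ext x; simp [and_comm]
  rw [hdiff]
  exact setIntegral_sdiff (measurableSet_le hφ measurable_const) hf.integrableOn
    fun x hx => le_trans hx hpq

theorem setIntegral_sub_setIntegral_le_integral_abs_sub (hf : Integrable f μ)
    (hg : Integrable g μ) (s : Set X) :
    ∫ x in s, f x ∂μ - ∫ x in s, g x ∂μ ≤ ∫ x, |f x - g x| ∂μ :=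
  calc ∫ x in s, f x ∂μ - ∫ x in s, g x ∂μ = ∫ x in s, (f x - g x) ∂μ :=
        (integral_sub hf.integrableOn hg.integrableOn).symm
    _ ≤ ∫ x in s, |f x - g x| ∂μ := integral_mono (hf.sub hg).integrableOn
        (hf.sub hg).abs.integrableOn fun _ => le_abs_self _
    _ ≤ ∫ x, |f x - g x| ∂μ :=
        setIntegral_le_integral (hf.sub hg).abs (Filter.Eventually.of_forall fun _ => abs_nonneg _)

theorem setIntegral_preimage_uIoc_le_integral_abs_sub (hφ : Measurable φ) (hf : Integrable f μ)
    (hg : Integrable g μ) {p q : ℝ}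
    (hpq : ∫ x in {x | φ x ≤ p}, f x ∂μ = ∫ x in {x | φ x ≤ q}, g x ∂μ) :
    ∫ x in φ ⁻¹' Ι p q, f x ∂μ ≤ ∫ x, |f x - g x| ∂μ := by
  rcases le_total p q with h | h
  · rw [uIoc_of_le h, setIntegral_preimage_Ioc_eq_sub hφ hf h, hpq]
    exact setIntegral_sub_setIntegral_le_integral_abs_sub hf hg _
  · rw [uIoc_of_ge h, setIntegral_preimage_Ioc_eq_sub hφ hf h, hpq]
    simpa only [abs_sub_comm] using setIntegral_sub_setIntegral_le_integral_abs_sub hg hf _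

end HalfSpaces

section Boxes

variable {ι : Type*} [Fintype ι]

theorem EuclideanSpace.volume_setOf_forall_mem (s : ι → Set ℝ) :
    volume {x : EuclideanSpace ℝ ι | ∀ i, x i ∈ s i} = ∏ i, volume (s i) := by
  rw [← volume_pi_pi]
  convert (EuclideanSpace.volume_preserving_symm_measurableEquiv_toLp ι).measure_preimage_equiv
    (univ.pi s) using 2
  ext x
  simp

theorem EuclideanSpace.volume_setOf_mem_and_forall_ne_mem [DecidableEq ι] (j : ι) (I J : Set ℝ) :
    volume {x : EuclideanSpace ℝ ι | x j ∈ I ∧ ∀ k ≠ j, x k ∈ J} =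
      volume I * volume J ^ (Fintype.card ι - 1) := by
  have hbox : {x : EuclideanSpace ℝ ι | x j ∈ I ∧ ∀ k ≠ j, x k ∈ J} =
      {x | ∀ k, x k ∈ if k = j then I else J} := by
    ext x
    refine ⟨fun ⟨hj, hk⟩ k => ?_, fun h => ⟨by simpa using h j, fun k hk => by simpa [hk] using h k⟩⟩
    split_ifs with h
    exacts [h ▸ hj, hk k h]
  rw [hbox, EuclideanSpace.volume_setOf_forall_mem, ← Finset.mul_prod_erase _ _ (Finset.mem_univ j),
    if_pos rfl, Finset.prod_congr rfl (g := fun _ => volume J) fun k hk => by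
      rw [if_neg (Finset.ne_of_mem_erase hk)],
    Finset.prod_const, Finset.card_erase_of_mem (Finset.mem_univ j), Finset.card_univ]

end Boxes

theorem quantile_lipschitz_in_L1_multidim_general
    (d : ℕ)
    (u₁ u₂ : EuclideanSpace ℝ (Fin d) → ℝ)
    (h₁p : ∀ x, 0 < u₁ x)
    (h₁i : Integrable u₁) (h₂i : Integrable u₂)
    (α : Fin d → ℝ)
    (K δ : ℝ) (hK : 0 < K) (hδ : 0 < δ)
    (j : Fin d)
    (q₁ q₂ : Fin d → ℝ)
    (hq₁ : ∀ i, ∫ x in {x : EuclideanSpace ℝ (Fin d) | x i ≤ q₁ i}, u₁ x = α i)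
    (hq₂ : ∀ i, ∫ x in {x : EuclideanSpace ℝ (Fin d) | x i ≤ q₂ i}, u₂ x = α i)
    (hq₁K : |q₁ j| ≤ K) (hq₂K : |q₂ j| ≤ K)
    (hlow : ∀ x : EuclideanSpace ℝ (Fin d),
      |x j| ≤ K → (∀ k, k ≠ j → |x k| ≤ 2 * K) → δ ≤ u₁ x) :
    |q₁ j - q₂ j| ≤ (∫ x, |u₁ x - u₂ x|) / (δ * (4 * K) ^ (d - 1)) := by
  have hproj : Measurable fun x : EuclideanSpace ℝ (Fin d) => x j :=
    (EuclideanSpace.proj j).continuous.measurable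
  set T := {x : EuclideanSpace ℝ (Fin d) | x j ∈ Ι (q₁ j) (q₂ j) ∧
    ∀ k ≠ j, x k ∈ Icc (-(2 * K)) (2 * K)}
  have hT : MeasurableSet T := by measurability
  have hvolT : volume T = ENNReal.ofReal (|q₁ j - q₂ j| * (4 * K) ^ (d - 1)) := by
    rw [EuclideanSpace.volume_setOf_mem_and_forall_ne_mem, volume_uIoc, Real.volume_Icc,
      Fintype.card_fin, show 2 * K - -(2 * K) = 4 * K by ring, ← ENNReal.ofReal_pow (by positivity),
      ← ENNReal.ofReal_mul (abs_nonneg _), abs_sub_comm]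
  have hTlow : ∀ x ∈ T, δ ≤ u₁ x := by
    have hI : Ι (q₁ j) (q₂ j) ⊆ Icc (-K) K :=
      uIoc_subset_uIcc.trans (uIcc_subset_Icc (abs_le.mp hq₁K) (abs_le.mp hq₂K))
    rintro x ⟨hxj, hxk⟩
    exact hlow x (abs_le.mpr (hI hxj)) fun k hk => abs_le.mpr (hxk k hk)
  rw [le_div_iff₀ (by positivity)]
  calc |q₁ j - q₂ j| * (δ * (4 * K) ^ (d - 1)) = δ * volume.real T := by
        rw [measureReal_def, hvolT, ENNReal.toReal_ofReal (by positivity)]; ring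
    _ ≤ ∫ x in T, u₁ x :=
        setIntegral_ge_of_const_le_real hT (hvolT ▸ ENNReal.ofReal_ne_top) hTlow h₁i.integrableOn
    _ ≤ ∫ x in (fun x => x j) ⁻¹' Ι (q₁ j) (q₂ j), u₁ x :=
        setIntegral_mono_set h₁i.integrableOn (Filter.Eventually.of_forall fun x => (h₁p x).le)
          (Filter.Eventually.of_forall fun x hx => hx.1)
    _ ≤ ∫ x, |u₁ x - u₂ x| :=
        setIntegral_preimage_uIoc_le_integral_abs_sub hproj h₁i h₂i ((hq₁ j).trans (hq₂ j).symm)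

/-- Multidimensional Lipschitz estimate for the `j`-th coordinate of the
quantile vector in `L¹`-distance: if both `j`-th quantile coordinates lie in `[-K, K]` and
`u₁ ≥ δ` on the slab `{|x_j| ≤ K, |x_k| ≤ 2K (k ≠ j)}`, then
`|Q_α^j(u₁) - Q_α^j(u₂)| ≤ ‖u₁ - u₂‖_{L¹} / (δ (4K)^{d-1})`. -/
theorem quantile_lipschitz_in_L1_multidim
    (d : ℕ) (hd : 1 ≤ d)
    (u₁ u₂ : EuclideanSpace ℝ (Fin d) → ℝ)
    (h₁c : Continuous u₁) (h₂c : Continuous u₂)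
    (h₁p : ∀ x, 0 < u₁ x) (h₂p : ∀ x, 0 < u₂ x)
    (h₁i : Integrable u₁) (h₂i : Integrable u₂)
    (h₁m : ∫ x, u₁ x = 1) (h₂m : ∫ x, u₂ x = 1)
    (α : Fin d → ℝ) (hα : ∀ j, α j ∈ Ioo (0 : ℝ) 1)
    (K δ : ℝ) (hK : 0 < K) (hδ : 0 < δ)
    (j : Fin d)
    (q₁ q₂ : Fin d → ℝ)
    (hq₁ : ∀ i, ∫ x in {x : EuclideanSpace ℝ (Fin d) | x i ≤ q₁ i}, u₁ x = α i)
    (hq₂ : ∀ i, ∫ x in {x : EuclideanSpace ℝ (Fin d) | x i ≤ q₂ i}, u₂ x = α i)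
    (hq₁K : |q₁ j| ≤ K) (hq₂K : |q₂ j| ≤ K)
    (hlow : ∀ x : EuclideanSpace ℝ (Fin d),
      |x j| ≤ K → (∀ k, k ≠ j → |x k| ≤ 2 * K) → δ ≤ u₁ x) :
    |q₁ j - q₂ j| ≤ (∫ x, |u₁ x - u₂ x|) / (δ * (4 * K) ^ (d - 1)) :=
  quantile_lipschitz_in_L1_multidim_general d u₁ u₂ h₁p h₁i h₂i α K δ hK hδ j q₁ q₂ hq₁ hq₂ hq₁K
    hq₂K hlow
end
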